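/- Let G = (V, E, s, r) be a countable directed graph. Then G is row-finite (every vertex receives at most finitely many edges, i.e., r⁻¹(v) is finite for every v ∈ V) if and only if every Cuntz–Krieger family for G on any complex Hilbert space is maximal, i.e., for every CK family (P, S) on H, every Hilbert space K, every isometry V : H → K, and every TCK family (Q, T) on K dilating (P, S) via V, the range of V is invariant under every Q_v, T_e and their adjoints. -/

import Mathlib

noncomputable section

open scoped ENNReal InnerProductSpace ComplexOrder
open ContinuousLinearMap

attribute [local instance] Classical.propDecidable

namespace GraphPaper

/-! ### Positivity of operators (without completeness assumptions) -/

/-- A bounded operator on a complex inner product space is positive if all the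
inner products `⟪T x, x⟫` are nonnegative (this forces them to be real). -/
def IsPosOp {W : Type*} [NormedAddCommGroup W] [InnerProductSpace ℂ W]
    (T : W →L[ℂ] W) : Prop :=
  ∀ x : W, 0 ≤ (inner ℂ (T x) x : ℂ)

/-! ### Toeplitz-Cuntz-Krieger families -/

variable {V E : Type*}

variable {H : Type*} [NormedAddCommGroup H] [InnerProductSpace ℂ H] [CompleteSpace H]

/-- The Toeplitz-Cuntz-Krieger relations for a family of projections `P` indexed by
vertices and partial isometries `S` indexed by edges. -/
def IsTCK (s r : E → V) (P : V → H →L[ℂ] H) (S : E → H →L[ℂ] H) : Prop :=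
  (∀ v, adjoint (P v) = P v) ∧
  (∀ v, P v ∘L P v = P v) ∧
  (∀ v w, v ≠ w → P v ∘L P w = 0) ∧
  (∀ e, adjoint (S e) ∘L S e = P (s e)) ∧
  (∀ (v : V) (F : Finset E), (∀ e ∈ F, r e = v) →
    IsPosOp (P v - ∑ e ∈ F, S e ∘L adjoint (S e)))

/-- A TCK family is a full Cuntz-Krieger family if for every vertex `v` receiving at
least one edge, the (unconditionally convergent) sum `∑_{r(e) = v} S_e S_e* x` is `P_v x`. -/
def IsFullCK (s r : E → V) (P : V → H →L[ℂ] H) (S : E → H →L[ℂ] H) : Prop :=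
  ∀ v : V, (∃ e, r e = v) → ∀ x : H,
    HasSum (fun e : {e : E // r e = v} => S e.1 (adjoint (S e.1) x)) (P v x)

/-- A TCK family is a Cuntz-Krieger family if `∑_{r(e) = v} S_e S_e* = P_v` for every
vertex `v` receiving finitely many and at least one edge. -/
def IsCK (s r : E → V) (P : V → H →L[ℂ] H) (S : E → H →L[ℂ] H) : Prop :=
  IsTCK s r P S ∧
  ∀ (v : V) (hfin : {e : E | r e = v}.Finite), hfin.toFinset.Nonempty →
    ∑ e ∈ hfin.toFinset, S e ∘L adjoint (S e) = P v

/-- The generators of a TCK family, indexed by vertices and edges. -/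
def gen (P : V → H →L[ℂ] H) (S : E → H →L[ℂ] H) : V ⊕ E → H →L[ℂ] H :=
  Sum.elim P S

variable {K : Type*} [NormedAddCommGroup K] [InnerProductSpace ℂ K] [CompleteSpace K]

/-- `(Q, T)` on `K` dilates `(P, S)` on `H` via the isometry `W : H → K`:
compressions of arbitrary nonempty words in the generators agree. -/
def Dilates (P : V → H →L[ℂ] H) (S : E → H →L[ℂ] H)
    (Q : V → K →L[ℂ] K) (T : E → K →L[ℂ] K) (W : H →L[ℂ] K) : Prop :=
  (∀ x : H, ‖W x‖ = ‖x‖) ∧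
  ∀ l : List (V ⊕ E), l ≠ [] →
    adjoint W ∘L (l.map (gen Q T)).prod ∘L W = (l.map (gen P S)).prod

/-! ### Finite paths -/

/-- A finite path `λ = e_n ⋯ e_1` in the directed graph determined by the source and
range maps `s r : E → V`, together with a base vertex `src` which is the source of the
path.  The edges are listed as `[e_n, …, e_1]`, with the consecutive compatibility
`s (e_{i+1}) = r (e_i)`, and (when the path is nonempty) `s (e_1) = src`.
A path with no edges is the length-zero path at the vertex `src`. -/
structure GPath (s r : E → V) : Type _ where
  src : V
  edges : List E
  chain : edges.Chain' fun e f => s e = r f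
  src_eq : ∀ e ∈ edges.getLast?, s e = src

variable {s r : E → V}

/-- The range of a finite path. -/
def GPath.rng (p : GPath s r) : V := ((p.edges.head?).map r).getD p.src

theorem GPath.ext' {p q : GPath s r} (h1 : p.src = q.src) (h2 : p.edges = q.edges) :
    p = q := by
  cases p; cases q; simp_all

/-- The length-zero path at a vertex. -/
def GPath.nil (s r : E → V) (v : V) : GPath s r where
  src := v
  edges := []
  chain := List.isChain_nil
  src_eq := by simp

/-- The tail of a path (removing the first, i.e. last-applied, edge). -/
def GPath.tail (p : GPath s r) : GPath s r where
  src := p.src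
  edges := p.edges.tail
  chain := p.chain.tail
  src_eq := by
    intro f hf
    apply p.src_eq
    rcases hp : p.edges with - | ⟨a, t⟩
    · rw [hp] at hf; simp at hf
    · rw [hp] at hf
      rcases t with - | ⟨b, t'⟩
      · simp at hf
      · simpa [List.getLast?_cons_cons] using hf

/-- The operator `T_λ = T_{e_n} ⋯ T_{e_1}` associated to a finite path `λ`;
for the length-zero path at `v` it is `P_v`. -/
def pathOp (P : V → H →L[ℂ] H) (S : E → H →L[ℂ] H) (p : GPath s r) : H →L[ℂ] H :=
  if p.edges.isEmpty then P p.src else (p.edges.map S).prod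

/-- Paths with source `v`. -/
abbrev SPath (s r : E → V) (v : V) : Type _ := {p : GPath s r // p.src = v}

/-! ### The model space and the model TCK family -/

/-- The model Hilbert space `H_{G,v} = ℓ²` of the set of paths with source `v`. -/
abbrev HGv (s r : E → V) (v : V) : Type _ := lp (fun _ : SPath s r v => ℂ) 2

/-- The basis vector `ξ_λ` of the model space. -/
def xi {v : V} (p : SPath s r v) : HGv s r v := lp.single 2 p 1

/-- Pulling back a function `x : ι → ℂ` along a partially defined map `f`. -/
def pullFun {ι κ : Type*} (f : κ → Option ι) (x : ι → ℂ) (k : κ) : ℂ :=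
  ((f k).map x).getD 0

theorem pullFun_core {ι κ : Type*} (f : κ → Option ι)
    (hf : ∀ ⦃k k' : κ⦄ ⦃i : ι⦄, f k = some i → f k' = some i → k = k')
    (x : lp (fun _ : ι => ℂ) 2) :
    Memℓp (pullFun f ⇑x) 2 ∧
      ∑' k : κ, ‖pullFun f ⇑x k‖ ^ (2 : ℝ) ≤ ∑' i : ι, ‖x i‖ ^ (2 : ℝ) := by
  classical
  have hp : 0 < (2 : ℝ≥0∞).toReal := by norm_num
  have hx : Summable fun i : ι => ‖x i‖ ^ (2 : ℝ) := by
    have := lp.memℓp x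
    rw [memℓp_gen_iff hp] at this
    simpa using this
  set σ : Set κ := {k : κ | (f k).isSome} with hσ
  have hmem : ∀ k : σ, ∃ i, f (k : κ) = some i := fun k => Option.isSome_iff_exists.mp k.2
  set h : σ → ι := fun k => (f (k : κ)).get k.2 with hh
  have hfk : ∀ k : σ, f (k : κ) = some (h k) := fun k => (Option.some_get k.2).symm
  have hinj : Function.Injective h := by
    intro a b hab
    have ha := hfk a
    have hb := hfk b
    rw [hab] at ha
    exact Subtype.ext (hf ha hb)
  have hval : ∀ k : σ, pullFun f ⇑x (k : κ) = x (h k) := by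
    intro k
    simp [pullFun, hfk k]
  set g : κ → ℝ := fun k => ‖pullFun f ⇑x k‖ ^ (2 : ℝ) with hg
  have hsupp : Function.support g ⊆ σ := by
    intro k hk
    by_contra hks
    have : f k = none := by
      rw [hσ] at hks
      simpa [Option.isNone_iff_eq_none, Option.not_isSome_iff_eq_none] using hks
    apply hk
    simp [hg, pullFun, this, Real.zero_rpow (by norm_num : (2:ℝ) ≠ 0)]
  have hcomp : (g ∘ (Subtype.val : σ → κ)) = (fun i => ‖x i‖ ^ (2 : ℝ)) ∘ h := by
    funext k
    simp [hg, Function.comp, hval k]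
  have hsummσ : Summable (g ∘ (Subtype.val : σ → κ)) := by
    rw [hcomp]; exact hx.comp_injective hinj
  have hsumm : Summable g := by
    obtain ⟨a, ha⟩ := hsummσ
    exact ⟨a, (hasSum_subtype_iff_of_support_subset hsupp).mp ha⟩
  constructor
  · apply memℓp_gen
    have : (fun k => ‖pullFun f ⇑x k‖ ^ (2 : ℝ≥0∞).toReal) = g := by
      funext k; simp [hg]
    rw [this]
    exact hsumm
  · have h1 : ∑' k : κ, g k = ∑' k : σ, g k := (tsum_subtype_eq_of_support_subset hsupp).symm
    have h2 : ∑' k : σ, g k ≤ ∑' i : ι, ‖x i‖ ^ (2 : ℝ) := by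
      have := tsum_comp_le_tsum_of_inj hx
        (fun i => Real.rpow_nonneg (norm_nonneg _) _) hinj
      calc ∑' k : σ, g k = ∑' k : σ, ((fun i => ‖x i‖ ^ (2 : ℝ)) ∘ h) k := by
            rw [← hcomp]; rfl
        _ ≤ ∑' i : ι, ‖x i‖ ^ (2 : ℝ) := this
    exact h1.trans_le h2

/-- The bounded operator `lp² ι → lp² κ` induced by a partially defined injection. -/
def pullCLM {ι κ : Type*} (f : κ → Option ι)
    (hf : ∀ ⦃k k' : κ⦄ ⦃i : ι⦄, f k = some i → f k' = some i → k = k') :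
    lp (fun _ : ι => ℂ) 2 →L[ℂ] lp (fun _ : κ => ℂ) 2 :=
  LinearMap.mkContinuous
    { toFun := fun x => ⟨pullFun f ⇑x, (pullFun_core f hf x).1⟩
      map_add' := by
        intro x y
        apply lp.ext
        funext k
        show pullFun f ⇑(x + y) k = pullFun f ⇑x k + pullFun f ⇑y k
        rw [lp.coeFn_add]
        unfold pullFun
        cases f k <;> simp
      map_smul' := by
        intro c x
        apply lp.ext
        funext k
        show pullFun f ⇑(c • x) k = c • pullFun f ⇑x k
        rw [lp.coeFn_smul]
        unfold pullFun
        cases f k <;> simp }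
    1
    (by
      intro x
      have hp : 0 < (2 : ℝ≥0∞).toReal := by norm_num
      rw [one_mul]
      set y : lp (fun _ : κ => ℂ) 2 := ⟨pullFun f ⇑x, (pullFun_core f hf x).1⟩ with hy
      show ‖y‖ ≤ ‖x‖
      have hle := (pullFun_core f hf x).2
      have h1 : ‖y‖ ^ (2:ℝ) = ∑' k : κ, ‖pullFun f ⇑x k‖ ^ (2 : ℝ) := by
        simpa using lp.norm_rpow_eq_tsum hp y
      have h2 : ‖x‖ ^ (2:ℝ) = ∑' i : ι, ‖x i‖ ^ (2 : ℝ) := by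
        simpa using lp.norm_rpow_eq_tsum hp x
      have key : ‖y‖ ^ (2:ℝ) ≤ ‖x‖ ^ (2:ℝ) := by rw [h1, h2]; exact hle
      have k2 : ‖y‖ ^ (2:ℕ) ≤ ‖x‖ ^ (2:ℕ) := by
        rw [← Real.rpow_natCast ‖y‖ 2, ← Real.rpow_natCast ‖x‖ 2]
        exact_mod_cast key
      have hs := Real.sqrt_le_sqrt k2
      rwa [Real.sqrt_sq (norm_nonneg y), Real.sqrt_sq (norm_nonneg x)] at hs)

/-- Decoding map for the model projection at `w`. -/
def decodeP (v w : V) (p : SPath s r v) : Option (SPath s r v) :=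
  if p.1.rng = w then some p else none

/-- Decoding map for the model partial isometry at `e`. -/
def decodeS (v : V) (e : E) (p : SPath s r v) : Option (SPath s r v) :=
  if p.1.edges.head? = some e then some ⟨p.1.tail, p.2⟩ else none

theorem decodeP_inj (v w : V) :
    ∀ ⦃k k' : SPath s r v⦄ ⦃i : SPath s r v⦄,
      decodeP v w k = some i → decodeP v w k' = some i → k = k' := by
  intro k k' i h1 h2
  unfold decodeP at h1 h2
  split_ifs at h1 h2 <;> simp_all

theorem decodeS_inj (v : V) (e : E) :
    ∀ ⦃k k' : SPath s r v⦄ ⦃i : SPath s r v⦄,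
      decodeS v e k = some i → decodeS v e k' = some i → k = k' := by
  intro k k' i h1 h2
  unfold decodeS at h1 h2
  split_ifs at h1 h2 with he1 he2
  have hi1 := Option.some.inj h1
  have hi2 := Option.some.inj h2
  apply Subtype.ext
  apply GPath.ext'
  · rw [k.2, k'.2]
  · obtain ⟨t1, ht1⟩ := List.head?_eq_some_iff.mp he1
    obtain ⟨t2, ht2⟩ := List.head?_eq_some_iff.mp he2
    have e1 : k.1.tail.edges = t1 := by simp [GPath.tail, ht1]
    have e2 : k'.1.tail.edges = t2 := by simp [GPath.tail, ht2]
    have : k.1.tail.edges = k'.1.tail.edges := by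
      rw [show k.1.tail = i.1 from congrArg Subtype.val hi1,
        show k'.1.tail = i.1 from congrArg Subtype.val hi2]
    rw [ht1, ht2]
    rw [e1, e2] at this
    rw [this]

/-- The model projection `P^v_w` on `H_{G,v}`: the orthogonal projection onto the span
of the basis vectors `ξ_λ` with `r(λ) = w`. -/
def modelP (s r : E → V) (v w : V) : HGv s r v →L[ℂ] HGv s r v :=
  pullCLM (decodeP v w) (decodeP_inj v w)

/-- The model partial isometry `S^v_e` on `H_{G,v}`: it maps `ξ_λ` to `ξ_{eλ}`
when `s(e) = r(λ)`, and to `0` otherwise. -/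
def modelS (s r : E → V) (v : V) (e : E) : HGv s r v →L[ℂ] HGv s r v :=
  pullCLM (decodeS v e) (decodeS_inj v e)

/-! ### Reducing subspaces, wandering spaces, maximality -/

universe u

/-- A subspace is reducing for a family of operators if it is invariant under all of them
and all their adjoints. -/
def Reduces (Q : V → H →L[ℂ] H) (T : E → H →L[ℂ] H) (M : Submodule ℂ H) : Prop :=
  (∀ w : V, ∀ x ∈ M, Q w x ∈ M ∧ adjoint (Q w) x ∈ M) ∧
  (∀ e : E, ∀ x ∈ M, T e x ∈ M ∧ adjoint (T e) x ∈ M)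

/-- The wandering space `W_v = {x | Q_v x = x, T_e* x = 0 for all e ∈ r⁻¹(v)}`. -/
def wandering (s r : E → V) (Q : V → H →L[ℂ] H) (T : E → H →L[ℂ] H) (v : V) :
    Submodule ℂ H where
  carrier := {x : H | Q v x = x ∧ ∀ e : E, r e = v → adjoint (T e) x = 0}
  add_mem' := by
    intro a b ha hb
    refine ⟨?_, fun e he => ?_⟩
    · rw [map_add, ha.1, hb.1]
    · rw [map_add, ha.2 e he, hb.2 e he, add_zero]
  zero_mem' := ⟨map_zero _, fun e _ => map_zero _⟩
  smul_mem' := by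
    intro c x hx
    refine ⟨?_, fun e he => ?_⟩
    · rw [map_smul, hx.1]
    · rw [map_smul, hx.2 e he, smul_zero]

/-- The restriction of a TCK family to a reducing subspace `M` is a full Cuntz-Krieger
family (expressed via the action on vectors of `M` in the ambient space). -/
def IsFullCKOn (s r : E → V) (Q : V → H →L[ℂ] H) (T : E → H →L[ℂ] H)
    (M : Submodule ℂ H) : Prop :=
  ∀ v : V, (∃ e, r e = v) → ∀ x ∈ M,
    HasSum (fun e : {e : E // r e = v} => T e.1 (adjoint (T e.1) x)) (Q v x)

/-- A TCK family is maximal if for every TCK family dilating it, the range of the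
dilation isometry is reducing. -/
def IsMaxTCK {V E : Type*} (s r : E → V) {H : Type u} [NormedAddCommGroup H]
    [InnerProductSpace ℂ H] [CompleteSpace H]
    (P : V → H →L[ℂ] H) (S : E → H →L[ℂ] H) : Prop :=
  ∀ (K : Type u) [NormedAddCommGroup K] [InnerProductSpace ℂ K] [CompleteSpace K],
    ∀ (Q : V → K →L[ℂ] K) (T : E → K →L[ℂ] K) (W : H →L[ℂ] K),
      IsTCK s r Q T → Dilates P S Q T W →
        ∀ (g : V ⊕ E) (x : H),
          gen Q T g (W x) ∈ Set.range W ∧ adjoint (gen Q T g) (W x) ∈ Set.range W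

end GraphPaper

/-!
For a dilation `(Q, T)` of `(P, S)` via an isometry `W`, an operator `A` on `K` with
`W* A W = B` and `W* A* A W = B* B` satisfies `A W = W B`: indeed `‖A W x‖ = ‖B x‖ = ‖W* A W x‖`,
and a vector whose norm is not decreased by `W*` lies in the range of `W`. This makes the range
of `W` invariant under every `Q_v` and `T_e`. For `T_e*`, if `v = r(e)` receives finitely many
edges, the Toeplitz inequality for `(Q, T)` and the Cuntz–Krieger relation for `(P, S)` give
`∑_{r(e') = v} ‖T_{e'}* W x‖² ≤ ⟪P_v x, x⟫ = ∑_{r(e') = v} ‖S_{e'}* x‖²`, while termwise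
`‖S_{e'}* x‖ = ‖W* T_{e'}* W x‖ ≤ ‖T_{e'}* W x‖`; so `T_e* W x` is again not shortened by `W*`.

Conversely, if `v = r(f)` receives infinitely many edges, the path model on `ℓ²` of the paths
with source `v` is a Cuntz–Krieger family: the empty path is the only basis vector outside the
ranges of the `S_e`, and no Cuntz–Krieger relation is imposed at `v`. Appending `f` embeds it isometrically into the path model at `s(f)` and intertwines all
generators, so the latter is a dilation; but `T_f*` sends the image of the empty path at `v` to
the empty path at `s(f)`, which is orthogonal to the range of the embedding.
-/

namespace GraphPaper

section Compression

variable {H : Type*} [NormedAddCommGroup H] [InnerProductSpace ℂ H] [CompleteSpace H]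
variable {K : Type*} [NormedAddCommGroup K] [InnerProductSpace ℂ K] [CompleteSpace K]
variable {W : H →L[ℂ] K}

theorem norm_adjoint_apply_le (hW : adjoint W ∘L W = 1) (z : K) : ‖adjoint W z‖ ≤ ‖z‖ := by
  have hWn : ‖W‖ ≤ 1 := W.opNorm_le_bound zero_le_one fun x => by
    rw [(norm_map_iff_adjoint_comp_self W).mpr hW x, one_mul]
  calc ‖adjoint W z‖ ≤ ‖adjoint W‖ * ‖z‖ := (adjoint W).le_opNorm z
    _ ≤ 1 * ‖z‖ := by rw [LinearIsometryEquiv.norm_map]; gcongr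
    _ = ‖z‖ := one_mul _

theorem apply_adjoint_apply_eq_of_norm_le (hW : adjoint W ∘L W = 1) {z : K}
    (hz : ‖z‖ ≤ ‖adjoint W z‖) : W (adjoint W z) = z := by
  have hsq : ‖z - W (adjoint W z)‖ ^ 2 = ‖z‖ ^ 2 - ‖adjoint W z‖ ^ 2 := by
    rw [@norm_sub_sq ℂ, (norm_map_iff_adjoint_comp_self W).mpr hW, ← adjoint_inner_left,
      inner_self_eq_norm_sq]
    ring
  have h0 : ‖z - W (adjoint W z)‖ ^ 2 ≤ 0 := by
    rw [hsq]; nlinarith [norm_nonneg z]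
  exact (sub_eq_zero.mp (norm_eq_zero.mp (pow_eq_zero_iff two_ne_zero |>.mp
    (le_antisymm h0 (sq_nonneg _))))).symm

theorem comp_eq_of_compression {A : K →L[ℂ] K} {B : H →L[ℂ] H} (hW : adjoint W ∘L W = 1)
    (hA : adjoint W ∘L A ∘L W = B) (hAA : adjoint W ∘L (adjoint A ∘L A) ∘L W = adjoint B ∘L B) :
    A ∘L W = W ∘L B := by
  ext1 x
  have hB : adjoint W (A (W x)) = B x := congrArg (fun T => T x) hA
  have hnorm : ‖A (W x)‖ ^ 2 = ‖B x‖ ^ 2 := by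
    have h := congrArg (fun T => inner ℂ (T x) x) hAA
    simp only [comp_apply, adjoint_inner_left, inner_self_eq_norm_sq_to_K] at h
    exact_mod_cast h
  rw [comp_apply, comp_apply, ← hB]
  refine (apply_adjoint_apply_eq_of_norm_le hW ?_).symm
  rw [hB]
  nlinarith [norm_nonneg (A (W x)), norm_nonneg (B x)]

theorem re_inner_sum_comp_adjoint {ι : Type*} (F : Finset ι) (S : ι → H →L[ℂ] H) (x : H) :
    RCLike.re (inner ℂ ((∑ e ∈ F, S e ∘L adjoint (S e)) x) x) =
      ∑ e ∈ F, ‖adjoint (S e) x‖ ^ 2 := by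
  simp only [sum_apply, sum_inner, map_sum, comp_apply]
  exact Finset.sum_congr rfl fun e _ => by
    rw [← adjoint_inner_right (S e), inner_self_eq_norm_sq]

theorem sum_norm_sq_adjoint_apply_le {ι : Type*} {F : Finset ι} {S : ι → H →L[ℂ] H}
    {P : H →L[ℂ] H} (hpos : IsPosOp (P - ∑ e ∈ F, S e ∘L adjoint (S e))) (x : H) :
    ∑ e ∈ F, ‖adjoint (S e) x‖ ^ 2 ≤ RCLike.re (inner ℂ (P x) x) := by
  have h := (Complex.le_def.mp (hpos x)).1
  rw [sub_apply, inner_sub_left] at h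
  simp only [Complex.zero_re, Complex.sub_re] at h
  rw [← re_inner_sum_comp_adjoint]
  exact sub_nonneg.mp h

theorem adjoint_comp_eq_of_compression {ι : Type*} {F : Finset ι} {e : ι} (he : e ∈ F)
    {P : H →L[ℂ] H} {S : ι → H →L[ℂ] H} {Q : K →L[ℂ] K} {T : ι → K →L[ℂ] K}
    (hW : adjoint W ∘L W = 1) (hQ : adjoint W ∘L Q ∘L W = P)
    (hT : ∀ e ∈ F, adjoint W ∘L T e ∘L W = S e) (hS : ∑ e ∈ F, S e ∘L adjoint (S e) = P)
    (hpos : IsPosOp (Q - ∑ e ∈ F, T e ∘L adjoint (T e))) :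
    adjoint (T e) ∘L W = W ∘L adjoint (S e) := by
  ext1 x
  have hTS : ∀ e ∈ F, adjoint W (adjoint (T e) (W x)) = adjoint (S e) x := fun e he => by
    rw [← hT e he, adjoint_comp, adjoint_comp, adjoint_adjoint]
    rfl
  have hle : ∀ e ∈ F, ‖adjoint (S e) x‖ ^ 2 ≤ ‖adjoint (T e) (W x)‖ ^ 2 := fun e he => by
    rw [← hTS e he]
    gcongr
    exact norm_adjoint_apply_le hW _
  have hsum : ∑ e ∈ F, ‖adjoint (T e) (W x)‖ ^ 2 ≤ ∑ e ∈ F, ‖adjoint (S e) x‖ ^ 2 :=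
    calc _ ≤ RCLike.re (inner ℂ (Q (W x)) (W x)) := sum_norm_sq_adjoint_apply_le hpos (W x)
      _ = RCLike.re (inner ℂ (P x) x) := by rw [← hQ, comp_apply, comp_apply, adjoint_inner_left]
      _ = ∑ e ∈ F, ‖adjoint (S e) x‖ ^ 2 := by rw [← hS, re_inner_sum_comp_adjoint]
  have heq := (Finset.sum_eq_sum_iff_of_le hle).mp (le_antisymm (Finset.sum_le_sum hle) hsum) e he
  rw [comp_apply, comp_apply, ← hTS e he]
  refine (apply_adjoint_apply_eq_of_norm_le hW ?_).symm
  rw [hTS e he]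
  nlinarith [norm_nonneg (adjoint (T e) (W x)), norm_nonneg (adjoint (S e) x)]

theorem isPosOp_of_adjoint_eq_of_comp_self {p : H →L[ℂ] H} (hsa : adjoint p = p)
    (hidem : p ∘L p = p) : IsPosOp p := by
  intro x
  calc (0 : ℂ) ≤ ((‖p x‖ ^ 2 : ℝ) : ℂ) := Complex.zero_le_real.mpr (sq_nonneg _)
    _ = inner ℂ (p x) (p x) := by rw [inner_self_eq_norm_sq_to_K]; push_cast; rfl
    _ = inner ℂ (p x) x := by
      conv_rhs => rw [← hidem, comp_apply]
      rw [← adjoint_inner_left, hsa]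

end Compression

theorem isMaxTCK_of_rowFinite {V E : Type*} {s r : E → V}
    (hrow : ∀ v : V, {e : E | r e = v}.Finite)
    {H : Type*} [NormedAddCommGroup H] [InnerProductSpace ℂ H] [CompleteSpace H]
    {P : V → H →L[ℂ] H} {S : E → H →L[ℂ] H} (hCK : IsCK s r P S) :
    IsMaxTCK s r P S := by
  obtain ⟨⟨hPsa, hPidem, -, hSS, -⟩, hCKsum⟩ := hCK
  rintro K _ _ _ Q T W ⟨hQsa, hQidem, -, hTT, hQpos⟩ ⟨hWn, hword⟩
  have hW := (norm_map_iff_adjoint_comp_self W).mp hWn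
  have hcomp : ∀ g, adjoint W ∘L gen Q T g ∘L W = gen P S g := fun g => by
    simpa using hword [g] (List.cons_ne_nil _ _)
  have hQ : ∀ w, Q w ∘L W = W ∘L P w := fun w =>
    comp_eq_of_compression hW (hcomp (.inl w))
      (by rw [hQsa, hQidem, hPsa, hPidem]; exact hcomp (.inl w))
  have hT : ∀ e, T e ∘L W = W ∘L S e := fun e =>
    comp_eq_of_compression hW (hcomp (.inr e)) (by rw [hTT, hSS]; exact hcomp (.inl (s e)))
  have hT' : ∀ e, adjoint (T e) ∘L W = W ∘L adjoint (S e) := fun e =>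
    have he := (hrow (r e)).mem_toFinset.mpr rfl
    adjoint_comp_eq_of_compression he hW (hcomp (.inl (r e))) (fun e _ => hcomp (.inr e))
      (hCKsum _ _ ⟨e, he⟩) (hQpos _ _ fun _ he => (hrow (r e)).mem_toFinset.mp he)
  rintro (w | e) x
  · have hQx : Q w (W x) = W (P w x) := congrArg (· x) (hQ w)
    exact ⟨⟨P w x, hQx.symm⟩, ⟨P w x, by rw [gen, Sum.elim_inl, hQsa, hQx]⟩⟩
  · exact ⟨⟨S e x, (congrArg (· x) (hT e)).symm⟩,
      ⟨adjoint (S e) x, (congrArg (· x) (hT' e)).symm⟩⟩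

section Dilation

variable {V E : Type*}
variable {H : Type*} [NormedAddCommGroup H] [InnerProductSpace ℂ H] [CompleteSpace H]
variable {K : Type*} [NormedAddCommGroup K] [InnerProductSpace ℂ K] [CompleteSpace K]

theorem dilates_of_gen_comp_eq {P : V → H →L[ℂ] H} {S : E → H →L[ℂ] H}
    {Q : V → K →L[ℂ] K} {T : E → K →L[ℂ] K} {W : H →L[ℂ] K} (hW : ∀ x, ‖W x‖ = ‖x‖)
    (hQTW : ∀ g, gen Q T g ∘L W = W ∘L gen P S g) : Dilates P S Q T W := by
  have hprod : ∀ l : List (V ⊕ E),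
      (l.map (gen Q T)).prod ∘L W = W ∘L (l.map (gen P S)).prod := by
    intro l
    induction l with
    | nil => rfl
    | cons g t ih =>
      simp only [List.map_cons, List.prod_cons, mul_def]
      rw [comp_assoc, ih, ← comp_assoc, hQTW, comp_assoc]
  refine ⟨hW, fun l _ => ?_⟩
  rw [hprod, ← comp_assoc, (norm_map_iff_adjoint_comp_self W).mp hW]
  rfl

end Dilation

section PEquivOperator

variable {ι κ μ : Type*}

/-- Every operator of the path model has this form, so their algebra is that of partial
bijections. -/
def pullOp (f : κ ≃. ι) : lp (fun _ : ι => ℂ) 2 →L[ℂ] lp (fun _ : κ => ℂ) 2 :=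
  pullCLM f fun _ _ _ h₁ h₂ => f.inj h₁ h₂

theorem pullOp_apply (f : κ ≃. ι) (x : lp (fun _ : ι => ℂ) 2) (k : κ) :
    pullOp f x k = ((f k).map x).getD 0 := rfl

theorem tsum_getD_map_eq_tsum_symm (f : κ ≃. ι) (φ : κ → ι → ℂ) :
    ∑' k, ((f k).map (φ k)).getD 0 = ∑' i, ((f.symm i).map (φ · i)).getD 0 := by
  let g : {k // (f k).isSome} → ι := fun k => (f k).get k.2
  have hfg : ∀ k : {k // (f k).isSome}, f k = some (g k) := fun k => (Option.some_get k.2).symm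
  have hg : Function.Injective g := fun a b h => Subtype.ext (f.inj (hfg a) (h ▸ hfg b))
  rw [← Subtype.val_injective.tsum_eq, ← hg.tsum_eq]
  · refine tsum_congr fun k => ?_
    rw [hfg, f.eq_some_iff.mpr (hfg k)]
    rfl
  · intro i hi
    rcases hk : f.symm i with _ | k
    · simp [hk] at hi
    have hk' := f.eq_some_iff.mp hk
    exact ⟨⟨k, by simp [hk']⟩, Option.some_injective _ ((hfg _).symm.trans hk')⟩
  · intro k hk
    rcases hi : f k with _ | i
    · simp [hi] at hk
    exact ⟨⟨k, by simp [hi]⟩, rfl⟩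

theorem adjoint_pullOp (f : κ ≃. ι) : adjoint (pullOp f) = pullOp f.symm := by
  refine ((eq_adjoint_iff _ _).mpr fun x y => ?_).symm
  have hl : ∀ i, inner ℂ (pullOp f.symm x i) (y i) =
      ((f.symm i).map fun k => starRingEnd ℂ (x k) * y i).getD 0 := fun i => by
    rw [RCLike.inner_apply, pullOp_apply]; cases f.symm i <;> simp [mul_comm]
  have hr : ∀ k, inner ℂ (x k) (pullOp f y k) =
      ((f k).map fun i => starRingEnd ℂ (x k) * y i).getD 0 := fun k => by
    rw [RCLike.inner_apply, pullOp_apply]; cases f k <;> simp [mul_comm]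
  rw [lp.inner_eq_tsum, lp.inner_eq_tsum, tsum_congr hl, tsum_congr hr,
    tsum_getD_map_eq_tsum_symm]
  rfl

theorem pullOp_trans (f : κ ≃. ι) (g : ι ≃. μ) :
    pullOp f ∘L pullOp g = pullOp (f.trans g) := by
  ext x k
  simp only [comp_apply, pullOp_apply]
  change _ = (((f k).bind g).map x).getD 0
  cases f k <;> rfl

theorem pullOp_refl : pullOp (PEquiv.refl κ) = 1 := rfl

theorem pullOp_ofSet_apply (A : Set κ) [DecidablePred (· ∈ A)] (x : lp (fun _ : κ => ℂ) 2)
    (k : κ) : pullOp (PEquiv.ofSet A) x k = A.indicator x k := by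
  by_cases hk : k ∈ A <;> simp [pullOp_apply, PEquiv.ofSet, hk]

theorem pullOp_ofSet_congr {A B : Set κ} [DecidablePred (· ∈ A)] [DecidablePred (· ∈ B)]
    (h : A = B) : pullOp (PEquiv.ofSet A) = pullOp (PEquiv.ofSet B) := by
  subst h; congr

theorem sum_pullOp_ofSet {α : Type*} (F : Finset α) (A : α → Set κ)
    [∀ a, DecidablePred (· ∈ A a)] [DecidablePred (· ∈ ⋃ a ∈ F, A a)]
    (hA : (F : Set α).PairwiseDisjoint A) :
    ∑ a ∈ F, pullOp (PEquiv.ofSet (A a)) = pullOp (PEquiv.ofSet (⋃ a ∈ F, A a)) := by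
  ext x k
  rw [sum_apply, lp.coeFn_sum, Finset.sum_apply, pullOp_ofSet_apply,
    Finset.indicator_biUnion_apply F A hA]
  simp only [pullOp_ofSet_apply]

theorem pullOp_ofSet_sub_pullOp_ofSet {A B : Set κ} [DecidablePred (· ∈ A)]
    [DecidablePred (· ∈ B)] [DecidablePred (· ∈ A \ B)] (hBA : B ⊆ A) :
    pullOp (PEquiv.ofSet A) - pullOp (PEquiv.ofSet B) = pullOp (PEquiv.ofSet (A \ B)) := by
  ext x k
  simp only [sub_apply, lp.coeFn_sub, Pi.sub_apply, pullOp_ofSet_apply]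
  rw [Set.indicator_sdiff hBA, Pi.sub_apply]

theorem PEquiv.ofSet_trans_ofSet (A B : Set κ) [DecidablePred (· ∈ A)] [DecidablePred (· ∈ B)]
    [DecidablePred (· ∈ A ∩ B)] :
    (PEquiv.ofSet A).trans (PEquiv.ofSet B) = PEquiv.ofSet (A ∩ B) := by
  ext k l
  simp only [PEquiv.trans_eq_some, PEquiv.ofSet_eq_some_iff, Set.mem_inter_iff]
  grind

theorem isPosOp_pullOp_ofSet (A : Set κ) [DecidablePred (· ∈ A)] :
    IsPosOp (pullOp (PEquiv.ofSet A)) :=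
  isPosOp_of_adjoint_eq_of_comp_self (by rw [adjoint_pullOp, PEquiv.ofSet_symm])
    (by rw [pullOp_trans, PEquiv.ofSet_trans_ofSet A A]; simp only [Set.inter_self])

end PEquivOperator

section Conj

variable {κ ι X Y Z : Type*}

def conjPEquiv (a : κ ≃ X) (b : ι ≃ Y) (m : X ≃. Y) : κ ≃. ι :=
  a.toPEquiv.trans (m.trans b.symm.toPEquiv)

theorem conjPEquiv_apply (a : κ ≃ X) (b : ι ≃ Y) (m : X ≃. Y) (k : κ) :
    conjPEquiv a b m k = (m (a k)).map b.symm := by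
  change (m (a k)).bind (fun y => some (b.symm y)) = _
  cases m (a k) <;> rfl

theorem conjPEquiv_trans {μ : Type*} (a : κ ≃ X) (b : ι ≃ Y) (c : μ ≃ Z) (m : X ≃. Y)
    (n : Y ≃. Z) : (conjPEquiv a b m).trans (conjPEquiv b c n) = conjPEquiv a c (m.trans n) := by
  ext k : 1
  change ((conjPEquiv a b m k).bind (conjPEquiv b c n)) = _
  simp only [conjPEquiv_apply]
  change _ = (((m (a k)).bind n).map c.symm)
  cases m (a k) <;> simp

theorem conjPEquiv_symm (a : κ ≃ X) (b : ι ≃ Y) (m : X ≃. Y) :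
    (conjPEquiv a b m).symm = conjPEquiv b a m.symm := by
  simp only [conjPEquiv, PEquiv.symm_trans_rev, ← Equiv.toPEquiv_symm, Equiv.symm_symm,
    PEquiv.trans_assoc]

theorem conjPEquiv_refl (a : κ ≃ X) : conjPEquiv a a (PEquiv.refl X) = PEquiv.refl κ := by
  ext1 k
  simp [conjPEquiv_apply]

theorem conjPEquiv_ofSet (a : κ ≃ X) (A : Set X) [DecidablePred (· ∈ A)]
    [DecidablePred (· ∈ a ⁻¹' A)] :
    conjPEquiv a a (PEquiv.ofSet A) = PEquiv.ofSet (a ⁻¹' A) := by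
  ext k l
  rw [conjPEquiv_apply]
  by_cases hk : a k ∈ A <;> simp [PEquiv.ofSet, hk]

end Conj

section Paths

variable {V E : Type*} {s r : E → V}

theorem GPath.rng_of_edges_eq_nil {p : GPath s r} (h : p.edges = []) : p.rng = p.src := by
  simp [GPath.rng, h]

theorem GPath.rng_of_head?_eq_some {p : GPath s r} {e : E} (h : p.edges.head? = some e) :
    p.rng = r e := by
  simp [GPath.rng, h]

def GPath.cons (e : E) (p : GPath s r) (h : s e = p.rng) : GPath s r where
  src := p.src
  edges := e :: p.edges
  chain := by
    rcases hp : p.edges with - | ⟨a, t⟩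
    · exact List.isChain_singleton _
    · refine List.isChain_cons_cons.mpr ⟨?_, hp ▸ p.chain⟩
      rw [h, GPath.rng_of_head?_eq_some (e := a) (by simp [hp])]
  src_eq := by
    intro x hx
    rcases hp : p.edges with - | ⟨a, t⟩
    · rw [hp, List.getLast?_singleton, Option.mem_some_iff] at hx
      rw [← hx, h, GPath.rng_of_edges_eq_nil hp]
    · rw [hp, List.getLast?_cons_cons] at hx
      exact p.src_eq x (hp ▸ hx)

theorem GPath.tail_cons (e : E) (p : GPath s r) (h : s e = p.rng) : (p.cons e h).tail = p :=
  GPath.ext' rfl rfl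

theorem GPath.source_head_eq_rng_tail {p : GPath s r} {e : E} (hp : p.edges.head? = some e) :
    s e = p.tail.rng := by
  obtain ⟨t, ht⟩ := List.head?_eq_some_iff.mp hp
  rcases t with - | ⟨a, t'⟩
  · rw [GPath.rng_of_edges_eq_nil (by simp [GPath.tail, ht])]
    exact p.src_eq e (by simp [ht])
  · have hc := p.chain
    rw [ht] at hc
    rw [GPath.rng_of_head?_eq_some (e := a) (by simp [GPath.tail, ht])]
    exact (List.isChain_cons_cons.mp hc).1

theorem GPath.cons_tail {p : GPath s r} {e : E} (hp : p.edges.head? = some e) :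
    p.tail.cons e (GPath.source_head_eq_rng_tail hp) = p := by
  obtain ⟨t, ht⟩ := List.head?_eq_some_iff.mp hp
  exact GPath.ext' rfl (by simp [GPath.cons, GPath.tail, ht])

def GPath.snoc (p : GPath s r) (f : E) (h : p.src = r f) : GPath s r where
  src := s f
  edges := p.edges ++ [f]
  chain := by
    refine List.isChain_append.mpr ⟨p.chain, List.isChain_singleton f, ?_⟩
    intro x hx y hy
    obtain rfl : f = y := by simpa using hy
    rw [← h, p.src_eq x hx]
  src_eq := by simp

theorem GPath.rng_snoc (p : GPath s r) (f : E) (h : p.src = r f) : (p.snoc f h).rng = p.rng := by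
  rcases hp : p.edges with - | ⟨a, t⟩
  · rw [GPath.rng_of_edges_eq_nil hp, h, GPath.rng_of_head?_eq_some (e := f)]
    simp [GPath.snoc, hp]
  · rw [GPath.rng_of_head?_eq_some (e := a) (by simp [GPath.snoc, hp]),
      GPath.rng_of_head?_eq_some (e := a) (by simp [hp])]

instance GPath.instCountable [Countable V] [Countable E] : Countable (GPath s r) :=
  Function.Injective.countable (f := fun p : GPath s r => (p.src, p.edges))
    fun _ _ h => GPath.ext' (congrArg Prod.fst h) (congrArg Prod.snd h)

def consPEquiv (v : V) (e : E) : SPath s r v ≃. SPath s r v where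
  toFun p := if h : s e = p.1.rng then some ⟨p.1.cons e h, p.2⟩ else none
  invFun := decodeS v e
  inv p q := by
    constructor
    · intro hq
      unfold decodeS at hq
      split_ifs at hq with he
      obtain rfl := Option.some_injective _ hq
      rw [dif_pos (GPath.source_head_eq_rng_tail he)]
      exact congrArg some (Subtype.ext (GPath.cons_tail he))
    · intro hp
      split_ifs at hp with h
      obtain rfl := Option.some_injective _ hp
      exact (if_pos rfl).trans (congrArg some (Subtype.ext (GPath.tail_cons e p.1 h)))

theorem isSome_consPEquiv_iff (v : V) (e : E) (p : SPath s r v) :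
    (consPEquiv v e p).isSome ↔ s e = p.1.rng := by
  change (if h : s e = p.1.rng then _ else none).isSome ↔ _
  split_ifs with h <;> simp [h]

theorem isSome_consPEquiv_symm_iff (v : V) (e : E) (q : SPath s r v) :
    ((consPEquiv v e).symm q).isSome ↔ q.1.edges.head? = some e := by
  change (decodeS v e q).isSome ↔ _
  unfold decodeS
  split_ifs with h <;> simp [h]

def snocPath (f : E) (p : SPath s r (r f)) : SPath s r (s f) := ⟨p.1.snoc f p.2, rfl⟩

theorem snocPath_injective (f : E) : Function.Injective (snocPath (s := s) (r := r) f) := by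
  intro p q h
  have h' : p.1.edges ++ [f] = q.1.edges ++ [f] := congrArg (fun z => z.1.edges) h
  exact Subtype.ext (GPath.ext' (p.2.trans q.2.symm) (List.append_cancel_right h'))

def snocPEquiv (f : E) : SPath s r (r f) ≃. SPath s r (s f) where
  toFun p := some (snocPath f p)
  invFun := Function.partialInv (snocPath f)
  inv p q := ((snocPath_injective f).isPartialInv p q).trans Option.some_inj.symm

theorem snocPEquiv_trans_consPEquiv (f e : E) :
    (snocPEquiv f).trans (consPEquiv (s f) e) =
      (consPEquiv (r f) e).trans (snocPEquiv (s := s) f) := by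
  ext1 p
  change (snocPEquiv f p).bind (consPEquiv (s f) e) = (consPEquiv (r f) e p).bind (snocPEquiv f)
  simp only [snocPEquiv, PEquiv.coe_mk, Option.bind_some]
  by_cases h : s e = p.1.rng
  · have h' : s e = (snocPath f p).1.rng := h.trans (GPath.rng_snoc _ _ p.2).symm
    simp only [consPEquiv, PEquiv.coe_mk, dif_pos h, dif_pos h', Option.bind_some]
    exact congrArg some (Subtype.ext (GPath.ext' rfl rfl))
  · have h' : ¬ s e = (snocPath f p).1.rng := by rwa [snocPath, GPath.rng_snoc]
    simp only [consPEquiv, PEquiv.coe_mk, dif_neg h, dif_neg h', Option.bind_none]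

theorem snocPEquiv_trans_ofSet_rng (f : E) (w : V) :
    (snocPEquiv f).trans (PEquiv.ofSet {q : SPath s r (s f) | q.1.rng = w}) =
      (PEquiv.ofSet {p : SPath s r (r f) | p.1.rng = w}).trans (snocPEquiv f) := by
  ext1 p
  change (snocPEquiv f p).bind (PEquiv.ofSet {q : SPath s r (s f) | q.1.rng = w}) =
    (PEquiv.ofSet {p : SPath s r (r f) | p.1.rng = w} p).bind (snocPEquiv f)
  simp only [snocPEquiv, PEquiv.coe_mk, Option.bind_some]
  by_cases h : p.1.rng = w
  · have h' : (snocPath f p).1.rng = w := (GPath.rng_snoc _ _ p.2).trans h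
    simp [PEquiv.ofSet, h, h']
  · have h' : ¬ (snocPath f p).1.rng = w := by rwa [snocPath, GPath.rng_snoc]
    simp [PEquiv.ofSet, h, h']

theorem snocPEquiv_symm_nil (f : E) :
    (snocPEquiv (s := s) (r := r) f).symm ⟨GPath.nil s r (s f), rfl⟩ = none := by
  refine Option.eq_none_iff_forall_ne_some.mpr fun p hp => ?_
  have h : snocPath f p = ⟨GPath.nil s r (s f), rfl⟩ :=
    Option.some_injective _ ((snocPEquiv f).eq_some_iff.mp hp)
  simpa [snocPath, GPath.snoc, GPath.nil] using congrArg (fun q => q.1.edges) h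

theorem consPEquiv_nil (f : E) :
    consPEquiv (s f) f ⟨GPath.nil s r (s f), rfl⟩ = some (snocPath f ⟨GPath.nil s r (r f), rfl⟩) :=
  (dif_pos rfl).trans (congrArg some (Subtype.ext (GPath.ext' rfl rfl)))

end Paths

section PathModel

variable {V E : Type*} {s r : E → V} {v : V} {J : Type*}

def pathPEquiv (v : V) : V ⊕ E → (SPath s r v ≃. SPath s r v) :=
  Sum.elim (fun w => PEquiv.ofSet {p | p.1.rng = w}) (fun e => (consPEquiv v e).symm)

/-- The model family `modelP`, `modelS` transported along `σ : J ≃ SPath s r v`, so that the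
underlying Hilbert space can be taken in any universe. -/
def pathModelP (σ : J ≃ SPath s r v) (w : V) :
    lp (fun _ : J => ℂ) 2 →L[ℂ] lp (fun _ : J => ℂ) 2 :=
  pullOp (conjPEquiv σ σ (pathPEquiv v (.inl w)))

def pathModelS (σ : J ≃ SPath s r v) (e : E) :
    lp (fun _ : J => ℂ) 2 →L[ℂ] lp (fun _ : J => ℂ) 2 :=
  pullOp (conjPEquiv σ σ (pathPEquiv v (.inr e)))

variable (σ : J ≃ SPath s r v)

theorem gen_pathModel (g : V ⊕ E) :
    gen (pathModelP σ) (pathModelS σ) g = pullOp (conjPEquiv σ σ (pathPEquiv v g)) := by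
  cases g <;> rfl

theorem pathModelP_eq (w : V) :
    pathModelP σ w = pullOp (PEquiv.ofSet {j | (σ j).1.rng = w}) := by
  rw [pathModelP, pathPEquiv, Sum.elim_inl, conjPEquiv_ofSet]
  rfl

theorem adjoint_pathModelS_comp_pathModelS (e : E) :
    adjoint (pathModelS σ e) ∘L pathModelS σ e = pathModelP σ (s e) := by
  rw [pathModelS, adjoint_pullOp, pullOp_trans, conjPEquiv_symm, conjPEquiv_trans, pathPEquiv,
    Sum.elim_inr, PEquiv.symm_symm, PEquiv.self_trans_symm, conjPEquiv_ofSet, pathModelP_eq]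
  exact pullOp_ofSet_congr (Set.ext fun j => (isSome_consPEquiv_iff v e (σ j)).trans eq_comm)

theorem pathModelS_comp_adjoint_pathModelS (e : E) :
    pathModelS σ e ∘L adjoint (pathModelS σ e) =
      pullOp (PEquiv.ofSet {j | (σ j).1.edges.head? = some e}) := by
  rw [pathModelS, adjoint_pullOp, pullOp_trans, conjPEquiv_symm, conjPEquiv_trans, pathPEquiv,
    Sum.elim_inr, PEquiv.symm_symm, PEquiv.symm_trans_self, conjPEquiv_ofSet]
  exact pullOp_ofSet_congr (Set.ext fun j => isSome_consPEquiv_symm_iff v e (σ j))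

theorem pairwiseDisjoint_head?_eq (F : Set E) :
    F.PairwiseDisjoint fun e => {j | (σ j).1.edges.head? = some e} :=
  fun _ _ _ _ hab => Set.disjoint_left.mpr fun _ h₁ h₂ =>
    hab (Option.some_injective _ (h₁.symm.trans h₂))

theorem sum_pathModelS_comp_adjoint (F : Finset E) :
    ∑ e ∈ F, pathModelS σ e ∘L adjoint (pathModelS σ e) =
      pullOp (PEquiv.ofSet (⋃ e ∈ F, {j | (σ j).1.edges.head? = some e})) := by
  simp only [pathModelS_comp_adjoint_pathModelS]
  exact sum_pullOp_ofSet F _ (pairwiseDisjoint_head?_eq σ F)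

theorem isTCK_pathModel : IsTCK s r (pathModelP σ) (pathModelS σ) := by
  refine ⟨fun w => ?_, fun w => ?_, fun w w' hww' => ?_, adjoint_pathModelS_comp_pathModelS σ,
    fun w F hF => ?_⟩
  · rw [pathModelP_eq, adjoint_pullOp, PEquiv.ofSet_symm]
  · rw [pathModelP_eq, pullOp_trans, PEquiv.ofSet_trans_ofSet]
    exact pullOp_ofSet_congr (Set.inter_self _)
  · rw [pathModelP_eq, pathModelP_eq, pullOp_trans, PEquiv.ofSet_trans_ofSet]
    ext x j
    rw [pullOp_ofSet_apply, Set.indicator_of_notMem fun h => hww' (h.1.symm.trans h.2)]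
    rfl
  · rw [sum_pathModelS_comp_adjoint, pathModelP_eq, pullOp_ofSet_sub_pullOp_ofSet]
    · exact isPosOp_pullOp_ofSet _
    · simp only [Set.iUnion_subset_iff]
      exact fun e he j hj => (GPath.rng_of_head?_eq_some hj).trans (hF e he)

theorem isCK_pathModel (hv : {e : E | r e = v}.Infinite) :
    IsCK s r (pathModelP σ) (pathModelS σ) := by
  refine ⟨isTCK_pathModel σ, fun w hw _ => ?_⟩
  rw [sum_pathModelS_comp_adjoint, pathModelP_eq]
  refine pullOp_ofSet_congr (Set.ext fun j => ?_)
  simp only [Set.mem_iUnion, Set.Finite.mem_toFinset, Set.mem_ofPred_eq, exists_prop]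
  constructor
  · rintro ⟨e, he, hj⟩
    exact (GPath.rng_of_head?_eq_some hj).trans he
  · intro hj
    rcases hp : (σ j).1.edges with - | ⟨e, t⟩
    · rw [GPath.rng_of_edges_eq_nil hp, (σ j).2] at hj
      exact absurd (hj ▸ hw) hv
    · exact ⟨e, (GPath.rng_of_head?_eq_some (by simp [hp])).symm.trans hj, by simp⟩

theorem pathPEquiv_trans_snocPEquiv_symm (f : E) (g : V ⊕ E) :
    (pathPEquiv (s f) g).trans (snocPEquiv f).symm =
      (snocPEquiv (s := s) (r := r) f).symm.trans (pathPEquiv (r f) g) := by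
  apply PEquiv.symm_injective
  simp only [PEquiv.symm_trans_rev, PEquiv.symm_symm]
  rcases g with w | e
  · exact snocPEquiv_trans_ofSet_rng f w
  · exact snocPEquiv_trans_consPEquiv f e

theorem not_isMaxTCK_pathModel {J₀ J₁ : Type u} (f : E) (σ₀ : J₀ ≃ SPath s r (r f))
    (σ₁ : J₁ ≃ SPath s r (s f)) : ¬ IsMaxTCK s r (pathModelP σ₀) (pathModelS σ₀) := by
  intro hmax
  set W := pullOp (conjPEquiv σ₁ σ₀ (snocPEquiv f).symm)
  have hW : ∀ x, ‖W x‖ = ‖x‖ := by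
    refine (norm_map_iff_adjoint_comp_self W).mpr ?_
    rw [adjoint_pullOp, pullOp_trans, conjPEquiv_symm, PEquiv.symm_symm, conjPEquiv_trans,
      PEquiv.trans_symm_eq_iff_forall_isSome.mpr fun _ => rfl, conjPEquiv_refl, pullOp_refl]
  have hQTW : ∀ g, gen (pathModelP σ₁) (pathModelS σ₁) g ∘L W =
      W ∘L gen (pathModelP σ₀) (pathModelS σ₀) g := fun g => by
    rw [gen_pathModel, gen_pathModel, pullOp_trans, pullOp_trans, conjPEquiv_trans,
      conjPEquiv_trans, pathPEquiv_trans_snocPEquiv_symm]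
  set ξ : lp (fun _ : J₀ => ℂ) 2 := lp.single 2 (σ₀.symm ⟨GPath.nil s r (r f), rfl⟩) 1
  obtain ⟨y, hy⟩ := (hmax _ _ _ W (isTCK_pathModel σ₁) (dilates_of_gen_comp_eq hW hQTW)
    (.inr f) ξ).2
  set j := σ₁.symm ⟨GPath.nil s r (s f), rfl⟩
  have h₀ : W y j = 0 := by
    simp only [W, pullOp_apply, conjPEquiv_apply, j, Equiv.apply_symm_apply, snocPEquiv_symm_nil]
    rfl
  have h₁ : adjoint (gen (pathModelP σ₁) (pathModelS σ₁) (.inr f)) (W ξ) j = 1 := by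
    rw [gen_pathModel, adjoint_pullOp, ← comp_apply, pullOp_trans, conjPEquiv_symm,
      conjPEquiv_trans, pullOp_apply, conjPEquiv_apply]
    simp only [pathPEquiv, Sum.elim_inr, PEquiv.symm_symm, PEquiv.trans, PEquiv.coe_mk, j,
      Equiv.apply_symm_apply, consPEquiv_nil]
    rw [Option.bind_some, (snocPEquiv f).eq_some_iff.mpr rfl]
    simp [ξ]
  exact zero_ne_one (h₀.symm.trans (hy ▸ h₁))

end PathModel

/-- A countable directed graph is row-finite if and only if every
Cuntz-Krieger family for it (on any complex Hilbert space) is maximal. -/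
theorem statement_12 {V E : Type*} [Countable V] [Countable E] (s r : E → V) :
    (∀ v : V, {e : E | r e = v}.Finite) ↔
      ∀ (H : Type u) [NormedAddCommGroup H] [InnerProductSpace ℂ H] [CompleteSpace H],
        ∀ (P : V → H →L[ℂ] H) (S : E → H →L[ℂ] H),
          IsCK s r P S → IsMaxTCK s r P S := by
  refine ⟨fun hrow H _ _ _ P S hCK => isMaxTCK_of_rowFinite hrow hCK, fun hmax v => ?_⟩
  by_contra hv
  obtain ⟨f, rfl⟩ := Set.Infinite.nonempty hv
  -- the paths are countable, so the path model has a copy in the universe `u`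
  let σ₀ := (equivShrink.{u} (SPath s r (r f))).symm
  let σ₁ := (equivShrink.{u} (SPath s r (s f))).symm
  exact not_isMaxTCK_pathModel f σ₀ σ₁ (hmax _ _ _ (isCK_pathModel σ₀ hv))

end GraphPaper
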